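/- Let X• be a 2-Segal simplicial set and let F• = ∂_{last}: P▷X• → X• be its right path space (so (P▷X)_n = X_{n+1}, ∂_i^▷ = ∂_i for 0 ≤ i ≤ n, and F_n = ∂_{n+1}). Then for every n ≥ 1 the square ((P▷X)_n → (P▷X)_{{0,n}}, (P▷X)_n → X_n, (P▷X)_{{0,n}} → X_{{0,n}}, X_n → X_{{0,n}}) is a pullback of sets; explicitly, the map X_{n+1} → X_n ×_{X_{{0,n}}} X_{{0,n,n+1}} is a bijection, which is an instance of the 2-Segal condition for X•. -/

import Mathlib

open CategoryTheory Simplicial SimplexCategory Opposite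

namespace RelSegal

/-- The morphism `[m] ⟶ [n]` in the simplex category determined by a monotone `ℕ`-valued map. -/
def natHom (m n : ℕ) (f : ℕ → ℕ) (hf : Monotone f) (h : f m ≤ n) :
    (⦋m⦌ : SimplexCategory) ⟶ ⦋n⦌ :=
  SimplexCategory.mkHom
    { toFun := fun k => ⟨f k.1, by have := hf (Nat.lt_succ_iff.mp k.2); omega⟩
      monotone' := fun a b hab => by
        simp only [Fin.mk_le_mk]; exact hf hab }

/-- Restriction of simplices along a morphism of the simplex category. -/
def rmap (X : SSet) {m n : ℕ} (φ : (⦋m⦌ : SimplexCategory) ⟶ ⦋n⦌) :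
    X.obj (op ⦋n⦌) → X.obj (op ⦋m⦌) := X.map φ.op

/-- The inclusion of the vertex `i` of `[n]`. -/
def vert (n i : ℕ) (h : i ≤ n) : (⦋0⦌ : SimplexCategory) ⟶ ⦋n⦌ :=
  natHom 0 n (fun _ => i) monotone_const h

/-- The inclusion of the edge `{i,j}` of `[n]`. -/
def edge (n i j : ℕ) (hij : i ≤ j) (hj : j ≤ n) : (⦋1⦌ : SimplexCategory) ⟶ ⦋n⦌ :=
  natHom 1 n (fun k => i + k * (j - i))
    (fun a b hab => by
      have := Nat.mul_le_mul_right (j - i) hab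
      show i + a * (j - i) ≤ i + b * (j - i); omega)
    (by show i + 1 * (j - i) ≤ n; omega)

/-- The inclusion of the interval `{i, i+1, …, j}` of `[n]`. -/
def interval (n i j : ℕ) (hij : i ≤ j) (hj : j ≤ n) : (⦋j - i⦌ : SimplexCategory) ⟶ ⦋n⦌ :=
  natHom (j - i) n (fun k => i + k) (fun a b hab => by show i + a ≤ i + b; omega)
    (by show i + (j - i) ≤ n; omega)

/-- A commutative square of sets which is a pullback: the canonical map into the fibre
product is a bijection. -/
def IsSetPullback {A B C D : Type*} (p : A → B) (q : A → C) (g : B → D) (h : C → D) : Prop :=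
  (∀ a, g (p a) = h (q a)) ∧ ∀ b c, g b = h c → ∃! a, p a = b ∧ q a = c

/-- A simplicial set is `1`-Segal if for every `n ≥ 2` the Segal map
`X_n → X_1 ×_{X_0} ⋯ ×_{X_0} X_1` is a bijection (injectivity together with
surjectivity onto the compatible families). -/
def Is1Segal (X : SSet) : Prop :=
  ∀ n, 2 ≤ n →
    (∀ x y : X.obj (op ⦋n⦌),
      (∀ i (hi : i + 1 ≤ n),
        rmap X (edge n i (i + 1) (by omega) hi) x = rmap X (edge n i (i + 1) (by omega) hi) y) →
      x = y) ∧
    (∀ f : ∀ i, i + 1 ≤ n → X.obj (op ⦋1⦌),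
      (∀ i (h1 : i + 1 ≤ n) (h2 : (i + 1) + 1 ≤ n),
        rmap X (vert 1 1 le_rfl) (f i h1) = rmap X (vert 1 0 (by omega)) (f (i + 1) h2)) →
      ∃ x : X.obj (op ⦋n⦌), ∀ i (hi : i + 1 ≤ n),
        rmap X (edge n i (i + 1) (by omega) hi) x = f i hi)

/-- The inclusion of the subset `{0, …, i, j, …, n}` of `[n]`. -/
def outer (n i j : ℕ) (hij : i < j) (hj : j ≤ n) :
    (⦋n - j + i + 1⦌ : SimplexCategory) ⟶ ⦋n⦌ :=
  natHom (n - j + i + 1) n (fun k => if k ≤ i then k else k + (j - i - 1))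
    (fun a b hab => by dsimp only; split_ifs <;> omega)
    (by split_ifs <;> omega)

/-- A simplicial set is `2`-Segal if for every `n ≥ 3` and `0 ≤ i < j ≤ n` the map
`X_n → X_{{i,…,j}} ×_{X_{{i,j}}} X_{{0,…,i,j,…,n}}` is a bijection. -/
def Is2Segal (X : SSet) : Prop :=
  ∀ n i j (_ : 3 ≤ n) (hij : i < j) (hj : j ≤ n),
    IsSetPullback
      (rmap X (interval n i j hij.le hj))
      (rmap X (outer n i j hij hj))
      (rmap X (edge (j - i) 0 (j - i) (Nat.zero_le _) le_rfl))
      (rmap X (edge (n - j + i + 1) i (i + 1) (by omega) (by omega)))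

/-- The inclusion `[2] ⟶ [n+1]` with vertices `0, n, n+1`. -/
def triMap (n : ℕ) : (⦋2⦌ : SimplexCategory) ⟶ ⦋n + 1⦌ :=
  natHom 2 (n + 1) (fun k => if k = 0 then 0 else if k = 1 then n else n + 1)
    (fun a b hab => by dsimp only; split_ifs <;> omega)
    (by split_ifs <;> omega)

/-! For `n ≥ 2` the square is the `2`-Segal square of `X_{n+1}` for the pair `0 < n`: the
interval `{0, …, n}` is the face `∂_{n+1}` and the outer face `{0, n, n+1}` is a `2`-simplex.
For `n = 1` the maps `X_2 → X_{{0,1,2}}` and `X_1 → X_{{0,1}}` are identities, so the square is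
trivially a pullback. -/

lemma natHom_congr {m n : ℕ} {f g : ℕ → ℕ} {hf : Monotone f} {hg : Monotone g} {hfm : f m ≤ n}
    {hgm : g m ≤ n} (h : ∀ k ≤ m, f k = g k) : natHom m n f hf hfm = natHom m n g hg hgm := by
  ext k : 3
  exact Fin.ext (h k (Nat.lt_succ_iff.mp k.2))

lemma natHom_comp_eq {a b c : ℕ} {f g h : ℕ → ℕ} {hf : Monotone f} {hg : Monotone g}
    {hh : Monotone h} {hfa : f a ≤ b} {hgb : g b ≤ c} {hha : h a ≤ c}
    (H : ∀ k ≤ a, g (f k) = h k) : natHom a b f hf hfa ≫ natHom b c g hg hgb = natHom a c h hh hha :=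
  natHom_congr (hf := hg.comp hf) (hfm := hg hfa |>.trans hgb) H

lemma natHom_id (m : ℕ) : natHom m m (fun k => k) monotone_id le_rfl = 𝟙 ⦋m⦌ :=
  rfl

lemma rmap_comp (X : SSet) {a b c : ℕ} (φ : (⦋a⦌ : SimplexCategory) ⟶ ⦋b⦌)
    (ψ : (⦋b⦌ : SimplexCategory) ⟶ ⦋c⦌) (x : X.obj (op ⦋c⦌)) :
    rmap X (φ ≫ ψ) x = rmap X φ (rmap X ψ x) := by
  simp [rmap]

lemma rmap_id (X : SSet) (m : ℕ) : rmap X (𝟙 ⦋m⦌) = id := by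
  funext x; simp [rmap]

lemma rmap_natHom_bijective (X : SSet) {m m' : ℕ} (h : m = m') :
    Function.Bijective (rmap X (natHom m m' (fun k => k) monotone_id h.le)) := by
  subst h
  rw [natHom_id, rmap_id]
  exact Function.bijective_id

lemma IsSetPullback.id_right {C D : Type*} (h : C → D) : IsSetPullback h id id h :=
  ⟨fun _ => rfl, fun _ c hbc => ⟨c, ⟨hbc.symm, rfl⟩, fun _ ha => ha.2⟩⟩

lemma IsSetPullback.of_bijective_right {A B C C' D : Type*} {p : A → B} {q : A → C} {g : B → D}
    {h : C → D} {σ : C → C'} (hσ : Function.Bijective σ) {q' : A → C'} {h' : C' → D}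
    (hq : ∀ a, σ (q a) = q' a) (hh : ∀ c, h' (σ c) = h c) (H : IsSetPullback p q g h) :
    IsSetPullback p q' g h' := by
  obtain ⟨hcomm, hunique⟩ := H
  refine ⟨fun a => by rw [← hq, hh]; exact hcomm a, fun b c' hbc => ?_⟩
  obtain ⟨c, rfl⟩ := hσ.surjective c'
  obtain ⟨a, ⟨hpa, hqa⟩, ha⟩ := hunique b c (by rw [hbc, hh])
  exact ⟨a, ⟨hpa, by rw [← hq, hqa]⟩,
    fun a' ⟨hpa', hqa'⟩ => ha a' ⟨hpa', hσ.injective (by rw [hq, hqa'])⟩⟩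

lemma isSetPullback_rightPath_one (X : SSet) :
    IsSetPullback
      (rmap X (natHom 1 2 (fun k => k) (fun _ _ hab => hab) (Nat.le_succ 1)))
      (rmap X (triMap 1))
      (rmap X (edge 1 0 1 (Nat.zero_le _) le_rfl))
      (rmap X (edge 2 0 1 zero_le_one one_le_two)) := by
  have hp : natHom 1 2 (fun k => k) (fun _ _ hab => hab) (Nat.le_succ 1)
      = edge 2 0 1 zero_le_one one_le_two := natHom_congr fun k _ => by omega
  have hq : triMap 1 = 𝟙 ⦋2⦌ := by
    unfold triMap; rw [← natHom_id]; exact natHom_congr fun k hk => by split_ifs <;> omega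
  have hg : edge 1 0 1 (Nat.zero_le _) le_rfl = 𝟙 ⦋1⦌ := by
    unfold edge; rw [← natHom_id]; exact natHom_congr fun k _ => by omega
  rw [hp, hq, hg, rmap_id, rmap_id]
  exact IsSetPullback.id_right _

lemma isSetPullback_rightPath_of_is2Segal {X : SSet} (hX : Is2Segal X) {n : ℕ} (hn : 2 ≤ n) :
    IsSetPullback
      (rmap X (natHom n (n + 1) (fun k => k) (fun _ _ hab => hab) (Nat.le_succ n)))
      (rmap X (triMap n))
      (rmap X (edge n 0 n (Nat.zero_le _) le_rfl))
      (rmap X (edge 2 0 1 zero_le_one one_le_two)) := by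
  -- the outer face of the `2`-Segal square is indexed by `⦋n + 1 - n + 0 + 1⦌`, only
  -- propositionally equal to `⦋2⦌`
  have h2 : 2 = n + 1 - n + 0 + 1 := by omega
  have H := hX (n + 1) 0 n (by omega) (by omega) n.le_succ
  have hp : interval (n + 1) 0 n (Nat.zero_le _) n.le_succ
      = natHom n (n + 1) (fun k => k) (fun _ _ hab => hab) (Nat.le_succ n) :=
    natHom_congr fun k _ => Nat.zero_add k
  rw [hp] at H
  refine H.of_bijective_right (rmap_natHom_bijective X h2) (fun a => ?_) (fun c => ?_)
  · rw [← rmap_comp]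
    unfold outer triMap
    exact congrArg (rmap X · a) (natHom_comp_eq fun k hk => by split_ifs <;> omega)
  · rw [← rmap_comp]
    unfold edge
    exact congrArg (rmap X · c) (natHom_comp_eq fun k _ => by omega)

/-- for a 2-Segal simplicial set `X` and its right path space
`P▷X` (with `(P▷X)_n = X_{n+1}`, `F_n = ∂_{n+1}`), the square
`((P▷X)_n, (P▷X)_{{0,n}}, X_n, X_{{0,n}})` is a pullback of sets for every `n ≥ 1`;
explicitly, the map `X_{n+1} → X_n ×_{X_{{0,n}}} X_{{0,n,n+1}}` is a bijection. -/
theorem statement16 (X : SSet) (hX : Is2Segal X) :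
    ∀ n (_ : 1 ≤ n),
      IsSetPullback
        (rmap X (natHom n (n + 1) (fun k => k) (fun _ _ hab => hab) (Nat.le_succ n)))
        (rmap X (triMap n))
        (rmap X (edge n 0 n (Nat.zero_le _) le_rfl))
        (rmap X (edge 2 0 1 (by omega) (by omega))) := by
  intro n hn
  obtain rfl | hn : n = 1 ∨ 2 ≤ n := by omega
  · exact isSetPullback_rightPath_one X
  · exact isSetPullback_rightPath_of_is2Segal hX hn

end RelSegal
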